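/- (Converse to Lemma 3.2) Let n ≥ 1 and let v, v' : Fin (n+1) → ℝⁿ be points with v(i) ≠ v(0) and v'(i) ≠ v'(0) for all i ≠ 0, and set w(i) = inv_{v(0),1}(v(i)), w'(i) = inv_{v'(0),1}(v'(i)) for i ≠ 0. Suppose there is λ > 0 such that dist(w'(i), w'(j)) = λ·dist(w(i), w(j)) for all i, j ≠ 0. Define u : Fin (n+1) → ℝ by u(0) = −log λ and u(i) = log λ + 2·log(dist(v'(i), v'(0)) / dist(v(i), v(0))) for i ≠ 0. Then dist(v'(i), v'(j)) = exp((u(i)+u(j))/2)·dist(v(i), v(j)) for all i ≠ j. -/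

import Mathlib

/-- Inversion in the sphere of center `p` and radius `R`. -/
noncomputable def sphInv {n : ℕ} (p : EuclideanSpace ℝ (Fin n)) (R : ℝ)
    (x : EuclideanSpace ℝ (Fin n)) : EuclideanSpace ℝ (Fin n) :=
  p + (R ^ 2 / (dist x p) ^ 2) • (x - p)

/-!
Inversion in the unit sphere about `p` scales distances by `dist x y / (dist x p * dist y p)`.
Hence if the inverted configurations are similar with ratio `λ`, then
`dist (v' i) (v' j) = λ rᵢ rⱼ dist (v i) (v j)` with `rᵢ = dist (v' i) (v' 0) / dist (v i) (v 0)`,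
and the scale factors `u` are exactly the logarithms making `exp ((uᵢ + uⱼ) / 2)` equal to
`λ rᵢ rⱼ`, respectively to `rᵢ` when `j = 0`.
-/

open Real

section Inversion

variable {n : ℕ}

theorem sphInv_eq_inversion (p : EuclideanSpace ℝ (Fin n)) (R : ℝ)
    (x : EuclideanSpace ℝ (Fin n)) : sphInv p R x = EuclideanGeometry.inversion p R x := by
  simp only [sphInv, EuclideanGeometry.inversion, div_pow, vsub_eq_sub, vadd_eq_add]
  ring_nf
  abel

theorem dist_sphInv_sphInv {p x y : EuclideanSpace ℝ (Fin n)} (hx : x ≠ p) (hy : y ≠ p)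
    (R : ℝ) : dist (sphInv p R x) (sphInv p R y) = R ^ 2 / (dist x p * dist y p) * dist x y := by
  rw [sphInv_eq_inversion, sphInv_eq_inversion, EuclideanGeometry.dist_inversion_inversion hx hy]

theorem dist_eq_of_dist_sphInv_eq {p x y p' x' y' : EuclideanSpace ℝ (Fin n)} {lam : ℝ}
    (hx : x ≠ p) (hy : y ≠ p) (hx' : x' ≠ p') (hy' : y' ≠ p')
    (h : dist (sphInv p' 1 x') (sphInv p' 1 y') = lam * dist (sphInv p 1 x) (sphInv p 1 y)) :
    dist x' y' = lam * (dist x' p' / dist x p) * (dist y' p' / dist y p) * dist x y := by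
  rw [dist_sphInv_sphInv hx hy, dist_sphInv_sphInv hx' hy'] at h
  have := dist_ne_zero.2 hx
  have := dist_ne_zero.2 hy
  have := dist_ne_zero.2 hx'
  have := dist_ne_zero.2 hy'
  field_simp at h ⊢
  linarith

end Inversion

section LogScale

/-- The statement's `u i` for `i ≠ 0`, with `r = dist (v' i) (v' 0) / dist (v i) (v 0)`. -/
noncomputable def logScale (lam r : ℝ) : ℝ := log lam + 2 * log r

theorem exp_half_logScale_add_logScale {lam a b : ℝ} (hlam : 0 < lam) (ha : 0 < a)
    (hb : 0 < b) : exp ((logScale lam a + logScale lam b) / 2) = lam * a * b := by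
  have : (logScale lam a + logScale lam b) / 2 = log lam + log a + log b := by
    unfold logScale; ring
  rw [this, exp_add, exp_add, exp_log hlam, exp_log ha, exp_log hb]

theorem exp_half_logScale_add_neg_log {lam a : ℝ} (ha : 0 < a) :
    exp ((logScale lam a + -log lam) / 2) = a := by
  have : (logScale lam a + -log lam) / 2 = log a := by
    unfold logScale; ring
  rw [this, exp_log ha]

end LogScale

theorem similar_inverted_implies_conformal_general {n : ℕ}
    (v v' : Fin (n + 1) → EuclideanSpace ℝ (Fin n))
    (hv : ∀ i, i ≠ 0 → v i ≠ v 0) (hv' : ∀ i, i ≠ 0 → v' i ≠ v' 0)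
    (lam : ℝ) (hlam : 0 < lam)
    (h : ∀ i j, i ≠ 0 → j ≠ 0 →
      dist (sphInv (v' 0) 1 (v' i)) (sphInv (v' 0) 1 (v' j)) =
        lam * dist (sphInv (v 0) 1 (v i)) (sphInv (v 0) 1 (v j)))
    (u : Fin (n + 1) → ℝ) (hu0 : u 0 = -Real.log lam)
    (hui : ∀ i, i ≠ 0 →
      u i = Real.log lam + 2 * Real.log (dist (v' i) (v' 0) / dist (v i) (v 0))) :
    ∀ i j, i ≠ j →
      dist (v' i) (v' j) = Real.exp ((u i + u j) / 2) * dist (v i) (v j) := by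
  have ratio_pos : ∀ k, k ≠ 0 → 0 < dist (v' k) (v' 0) / dist (v k) (v 0) :=
    fun k hk => div_pos (dist_pos.2 (hv' k hk)) (dist_pos.2 (hv k hk))
  have to_base : ∀ k, k ≠ 0 →
      dist (v' k) (v' 0) = exp ((u k + u 0) / 2) * dist (v k) (v 0) := by
    intro k hk
    rw [hui k hk, hu0, ← logScale, exp_half_logScale_add_neg_log (ratio_pos k hk),
      div_mul_cancel₀ _ (dist_ne_zero.2 (hv k hk))]
  intro i j hij
  rcases eq_or_ne i 0 with rfl | hi
  · rw [add_comm (u 0), dist_comm, dist_comm (v 0)]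
    exact to_base j hij.symm
  rcases eq_or_ne j 0 with rfl | hj
  · exact to_base i hi
  rw [dist_eq_of_dist_sphInv_eq (hv i hi) (hv j hj) (hv' i hi) (hv' j hj) (h i j hi hj),
    hui i hi, hui j hj, ← logScale, ← logScale,
    exp_half_logScale_add_logScale hlam (ratio_pos i hi) (ratio_pos j hj)]

/-- Converse to Lemma 3.2: if the inverted configurations `w`, `w'` are similar with ratio
`λ`, then `v` and `v'` are discretely conformally related with the explicit scale factors
`u 0 = -log λ` and `u i = log λ + 2 log (dist (v' i) (v' 0) / dist (v i) (v 0))` for `i ≠ 0`. -/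
theorem similar_inverted_implies_conformal {n : ℕ} (hn : 1 ≤ n)
    (v v' : Fin (n + 1) → EuclideanSpace ℝ (Fin n))
    (hv : ∀ i, i ≠ 0 → v i ≠ v 0) (hv' : ∀ i, i ≠ 0 → v' i ≠ v' 0)
    (lam : ℝ) (hlam : 0 < lam)
    (h : ∀ i j, i ≠ 0 → j ≠ 0 →
      dist (sphInv (v' 0) 1 (v' i)) (sphInv (v' 0) 1 (v' j)) =
        lam * dist (sphInv (v 0) 1 (v i)) (sphInv (v 0) 1 (v j)))
    (u : Fin (n + 1) → ℝ) (hu0 : u 0 = -Real.log lam)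
    (hui : ∀ i, i ≠ 0 →
      u i = Real.log lam + 2 * Real.log (dist (v' i) (v' 0) / dist (v i) (v 0))) :
    ∀ i j, i ≠ j →
      dist (v' i) (v' j) = Real.exp ((u i + u j) / 2) * dist (v i) (v j) :=
  similar_inverted_implies_conformal_general v v' hv hv' lam hlam h u hu0 hui
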